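/- Consider the instance with agents A = {1, 2} and chores G = {a, b}, with utilities u_{1a} = -1, u_{1b} = -2, u_{2a} = 0, u_{2b} = -1. Writing t = x_{1b} for an FPM x, the product of disutilities equals (-u_1 · x_1)(-u_2 · x_2) = (1 + t)(1 - t) = 1 - t², and the unique FPM maximizing this product over all FPMs (all of which are Pareto-optimal in this instance) is the one with t = 0 (i.e., x_{1a} = 1, x_{2b} = 1). At this maximizer, agent 2's disutility for their own bundle is -u_2 · x_2 = 1 while agent 2's disutility for agent 1's bundle is -u_2 · x_1 = 0. -/
import Mathlib


open Finset

/-- A fractional perfect matching (agents Fin 2, items Fin 2; item a = 0, b = 1). -/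
def IsFPM (x : Fin 2 → Fin 2 → ℝ) : Prop :=
  (∀ i j, 0 ≤ x i j) ∧ (∀ i, ∑ j, x i j = 1) ∧ (∀ j, ∑ i, x i j = 1)

/-- Pareto-optimality of an FPM. -/
def ParetoOptimal (u x : Fin 2 → Fin 2 → ℝ) : Prop :=
  ¬ ∃ y : Fin 2 → Fin 2 → ℝ, IsFPM y ∧
    (∀ i, ∑ j, u i j * x i j ≤ ∑ j, u i j * y i j) ∧
    (∃ i, ∑ j, u i j * x i j < ∑ j, u i j * y i j)

/-- Product of the two agents' disutilities. -/
def disutilProd (u x : Fin 2 → Fin 2 → ℝ) : ℝ :=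
  (-(∑ j, u 0 j * x 0 j)) * (-(∑ j, u 1 j * x 1 j))

lemma fpm_eqs {x : Fin 2 → Fin 2 → ℝ} (h : IsFPM x) :
    x 0 0 = 1 - x 0 1 ∧ x 1 0 = x 0 1 ∧ x 1 1 = 1 - x 0 1 := by
  obtain ⟨_, hr, hc⟩ := h
  have h0 := hr 0; have h1 := hr 1
  have hc0 := hc 0
  simp [Fin.sum_univ_two] at h0 h1 hc0
  refine ⟨by linarith, by linarith, by linarith⟩

/-- For the chores instance u₁ = (-1, -2), u₂ = (0, -1), the product
of disutilities of an FPM x equals (1 + t)(1 - t) = 1 - t² where t = x₀ᵦ; every FPM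
is Pareto-optimal; the unique maximizer of the product over all FPMs is the FPM x*
with x*₀ₐ = 1, x*₁ᵦ = 1 (i.e. t = 0); and at x*, agent 2's disutility for its own
bundle is 1 while its disutility for agent 1's bundle is 0. -/
theorem pareto_constrained_nash_bargaining_unfair
    (u : Fin 2 → Fin 2 → ℝ) (hu : u = ![![-1, -2], ![0, -1]])
    (xstar : Fin 2 → Fin 2 → ℝ) (hxstar : xstar = ![![1, 0], ![0, 1]]) :
    (∀ x : Fin 2 → Fin 2 → ℝ, IsFPM x →
      disutilProd u x = (1 + x 0 1) * (1 - x 0 1) ∧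
      disutilProd u x = 1 - (x 0 1) ^ 2) ∧
    (∀ x : Fin 2 → Fin 2 → ℝ, IsFPM x → ParetoOptimal u x) ∧
    IsFPM xstar ∧
    (∀ x : Fin 2 → Fin 2 → ℝ, IsFPM x → disutilProd u x ≤ disutilProd u xstar) ∧
    (∀ x : Fin 2 → Fin 2 → ℝ, IsFPM x → disutilProd u x = disutilProd u xstar → x = xstar) ∧
    (-(∑ j, u 1 j * xstar 1 j) = 1) ∧
    (-(∑ j, u 1 j * xstar 0 j) = 0) := by

  subst hu; subst hxstar
  have key : ∀ x : Fin 2 → Fin 2 → ℝ, IsFPM x →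
      disutilProd ![![-1, -2], ![0, -1]] x = (1 + x 0 1) * (1 - x 0 1) := by
    intro x hx
    obtain ⟨e1, e2, e3⟩ := fpm_eqs hx
    simp only [disutilProd, Fin.sum_univ_two, Matrix.cons_val_zero,
      Matrix.cons_val_one, Matrix.head_cons, e1, e2, e3]
    ring
  have star_fpm : IsFPM (![![(1:ℝ), 0], ![0, 1]]) := by
    refine ⟨?_, ?_, ?_⟩ <;> intro i <;> fin_cases i <;>
      simp [Fin.sum_univ_two] <;> intro j <;> fin_cases j <;> norm_num
  have star_val : disutilProd ![![-1, -2], ![0, -1]] ![![(1:ℝ), 0], ![0, 1]] = 1 := by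
    simp [disutilProd, Fin.sum_univ_two]
  refine ⟨?_, ?_, star_fpm, ?_, ?_, ?_, ?_⟩
  · intro x hx
    constructor
    · exact key x hx
    · rw [key x hx]; ring
  · intro x hx
    rintro ⟨y, hy, hle, i, hlt⟩
    obtain ⟨e1, e2, e3⟩ := fpm_eqs hx
    obtain ⟨f1, f2, f3⟩ := fpm_eqs hy
    have g0 := hle 0; have g1 := hle 1
    simp [Fin.sum_univ_two, e1, e2, e3, f1, f2, f3] at g0 g1
    fin_cases i <;>
      simp [Fin.sum_univ_two, e1, e2, e3, f1, f2, f3] at hlt <;> linarith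
  · intro x hx
    rw [key x hx, star_val]
    nlinarith [hx.1 0 1, hx.1 1 0, (fpm_eqs hx).2.1]
  · intro x hx hval
    rw [key x hx, star_val] at hval
    obtain ⟨e1, e2, e3⟩ := fpm_eqs hx
    have ht : x 0 1 = 0 := by nlinarith [hx.1 0 1, hx.1 1 0]
    funext i j
    fin_cases i <;> fin_cases j <;>
      simp [e1, e2, e3, ht] <;> linarith
  · simp [Fin.sum_univ_two]
  · simp [Fin.sum_univ_two]
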